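/- Let A be a real central hyperplane arrangement with modular line l and fundamental chamber c₀ incident to l, and let π: P(A,c₀) → P(A_l,(c₀)_l) be the localization map of chamber posets. Then the fiber U = π⁻¹(π(c₀)) is linearly ordered c₀ < c₁ < ... < c_t, and this induces a linear order H₁,...,H_t on A − A_l where H_i is the unique hyperplane in S(c_{i−1}, c_i); moreover |A − A_l| = t equals the length of this chain. -/

import Mathlib

open Matrix
open scoped Classical

/-- Ambient space: `ℝⁿ`. -/
abbrev V (n : ℕ) := Fin n → ℝ

/-- The linear functional `x ↦ v ⬝ᵥ x` determined by a normal vector. -/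
def hypl {n : ℕ} (v : V n) : V n →ₗ[ℝ] ℝ where
  toFun x := v ⬝ᵥ x
  map_add' x y := by simp [dotProduct_add]
  map_smul' c x := by simp [dotProduct_smul]

/-- Two normal vectors define the same hyperplane. -/
def SameHyp {n : ℕ} (u w : V n) : Prop := ∀ x, u ⬝ᵥ x = 0 ↔ w ⬝ᵥ x = 0

/-- A finite set of normal vectors represents a (central) hyperplane arrangement
if each normal is nonzero and distinct normals define distinct hyperplanes. -/
def IsArrangement {n : ℕ} (A : Finset (V n)) : Prop :=
  (∀ v ∈ A, v ≠ 0) ∧ ∀ u ∈ A, ∀ w ∈ A, SameHyp u w → u = w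

/-- The point `x` realizes the sign vector `c` on the arrangement `A`. -/
def Realizes {n : ℕ} (A : Finset (V n)) (c : V n → Bool) (x : V n) : Prop :=
  ∀ v ∈ A, if c v then 0 < v ⬝ᵥ x else v ⬝ᵥ x < 0

/-- A chamber of `A`, encoded by its sign vector. -/
def IsChamber {n : ℕ} (A : Finset (V n)) (c : V n → Bool) : Prop :=
  ∃ x, Realizes A c x

/-- The separation set of two chambers: hyperplanes on which their signs differ. -/
noncomputable def SepSet {n : ℕ} (A : Finset (V n)) (c d : V n → Bool) : Finset (V n) :=
  A.filter (fun v => c v ≠ d v)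

/-- The localization of `A` at the subspace `ker u ∩ ker w`:
hyperplanes containing this subspace. -/
noncomputable def loc {n : ℕ} (A : Finset (V n)) (u w : V n) : Finset (V n) :=
  A.filter (fun v => ∀ x, u ⬝ᵥ x = 0 → w ⬝ᵥ x = 0 → v ⬝ᵥ x = 0)

/-- `u, w` span a codimension-2 intersection subspace `ker u ∩ ker w` of `A`. -/
def Codim2 {n : ℕ} (A : Finset (V n)) (u w : V n) : Prop :=
  u ∈ A ∧ w ∈ A ∧ LinearIndependent ℝ ![u, w]

/-- `I` is biclosed w.r.t. the chamber `c₀`: its intersection with each rank-2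
localization is the separation set of some chamber of the localization. -/
def IsBiclosed {n : ℕ} (A : Finset (V n)) (c₀ : V n → Bool) (I : Finset (V n)) : Prop :=
  ∀ u w, Codim2 A u w →
    ∃ d, IsChamber (loc A u w) d ∧ I ∩ loc A u w = SepSet (loc A u w) c₀ d

/-- `I ⊆ A` is convex with respect to `c₀`. -/
def IsConvex {n : ℕ} (A : Finset (V n)) (c₀ : V n → Bool) (I : Finset (V n)) : Prop :=
  ∀ H ∈ A \ I, ∃ e, IsChamber A e ∧ H ∈ SepSet A c₀ e ∧ SepSet A c₀ e ⊆ A \ I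

/-- `I` is 2-closed: its intersection with each rank-2 localization is convex there. -/
def Is2Closed {n : ℕ} (A : Finset (V n)) (c₀ : V n → Bool) (I : Finset (V n)) : Prop :=
  ∀ u w, Codim2 A u w → IsConvex (loc A u w) c₀ (I ∩ loc A u w)

/-- `v` is a wall of the chamber `c`: some point of the closure of `c` lies on the
hyperplane of `v` and strictly off every other hyperplane of `A`. -/
def IsWall {n : ℕ} (A : Finset (V n)) (c : V n → Bool) (v : V n) : Prop :=
  v ∈ A ∧ ∃ x, v ⬝ᵥ x = 0 ∧ ∀ w ∈ A, ¬ SameHyp v w →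
    (if c w then 0 < w ⬝ᵥ x else w ⬝ᵥ x < 0)

/-- The sign vector `v` is feasible: some point satisfies all its strict constraints. -/
def Feasible {n : ℕ} (A : Finset (V n)) (v : V n → SignType) : Prop :=
  ∃ x : V n, ∀ h ∈ A, (v h = 1 → 0 < h ⬝ᵥ x) ∧ (v h = -1 → h ⬝ᵥ x < 0)

/-- A circuit of `A`: a minimal nonzero infeasible sign vector supported on `A`. -/
def IsCircuit {n : ℕ} (A : Finset (V n)) (v : V n → SignType) : Prop :=
  (∀ h, v h ≠ 0 → h ∈ A) ∧ (∃ h, v h ≠ 0) ∧ ¬ Feasible A v ∧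
    ∀ w : V n → SignType, (∀ h, w h ≠ 0 → w h = v h) →
      {h | w h ≠ 0} ⊂ {h | v h ≠ 0} → Feasible A w

/-- A reduced gallery from `c₀` to `-c₀` in `A`, crossing hyperplanes `H 0, H 1, …`
in order. -/
def IsGallery {n N : ℕ} (A : Finset (V n)) (c₀ : V n → Bool) (H : Fin N → V n)
    (d : Fin (N + 1) → V n → Bool) : Prop :=
  (∀ i, IsChamber A (d i)) ∧ d 0 = c₀ ∧ (∀ v ∈ A, d (Fin.last N) v = !c₀ v) ∧
    ∀ i : Fin N, SepSet A (d i.castSucc) (d i.succ) = {H i}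

/-- The enumeration `H` of `A` is admissible: on every rank-2 localization, the
induced order is the crossing order of some reduced gallery of the localization. -/
def Admissible {n N : ℕ} (A : Finset (V n)) (c₀ : V n → Bool) (H : Fin N → V n) : Prop :=
  ∀ u w, Codim2 A u w →
    ∃ (M : ℕ) (G : Fin M → V n) (e : Fin (M + 1) → V n → Bool) (φ : Fin M → Fin N),
      IsGallery (loc A u w) c₀ G e ∧ StrictMono φ ∧ ∀ k, G k = H (φ k)

/-- The intersection lattice of `A`, as a set of subspaces of `ℝⁿ`. -/
def InterLattice {n : ℕ} (A : Finset (V n)) : Set (Submodule ℝ (V n)) :=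
  {X | ∃ S : Finset (V n), S ⊆ A ∧ X = S.inf (fun v => LinearMap.ker (hypl v))}

/-- A modular element of the intersection lattice of `A`. -/
def IsModular {n : ℕ} (A : Finset (V n)) (X : Submodule ℝ (V n)) : Prop :=
  X ∈ InterLattice A ∧ ∀ Y ∈ InterLattice A, X ⊔ Y ∈ InterLattice A

/-- The rank of the arrangement `A`. -/
noncomputable def rankA {n : ℕ} (A : Finset (V n)) : ℕ :=
  Module.finrank ℝ (Submodule.span ℝ (A : Set (V n)))

/-- A modular flag: a maximal chain `⊤ = X 0 > X 1 > ⋯ > X r` of modular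
elements of the intersection lattice, with `X i` of codimension `i`. -/
def IsModularFlag {n : ℕ} (A : Finset (V n)) (X : Fin (rankA A + 1) → Submodule ℝ (V n)) : Prop :=
  X 0 = ⊤ ∧ (∀ i, IsModular A (X i)) ∧ (∀ i j, i ≤ j → X j ≤ X i) ∧
    ∀ i : Fin (rankA A + 1), Module.finrank ℝ (X i) = n - (i : ℕ)

/-- `A` is supersolvable: its intersection lattice has a modular flag. -/
def IsSupersolvable {n : ℕ} (A : Finset (V n)) : Prop :=
  ∃ X : Fin (rankA A + 1) → Submodule ℝ (V n), IsModularFlag A X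

/-- The chamber `c` is incident to the subspace `X`:  some point of `X` lies in the
closure of `c` and strictly off every hyperplane of `A` not containing `X`. -/
def IncidentSub {n : ℕ} (A : Finset (V n)) (c : V n → Bool) (X : Submodule ℝ (V n)) : Prop :=
  ∃ x, x ∈ X ∧ ∀ v ∈ A, ¬ X ≤ LinearMap.ker (hypl v) →
    (if c v then 0 < v ⬝ᵥ x else v ⬝ᵥ x < 0)

/-- The chamber `c` is incident to the codimension-2 subspace `ker u ∩ ker w`. -/
def IncidentLoc {n : ℕ} (A : Finset (V n)) (c : V n → Bool) (u w : V n) : Prop :=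
  ∃ x, (∀ v ∈ loc A u w, v ⬝ᵥ x = 0) ∧ ∀ v ∈ A, v ∉ loc A u w →
    (if c v then 0 < v ⬝ᵥ x else v ⬝ᵥ x < 0)

/-- `(A, c₀)` is bineighborly: any chamber is incident to the intersection of any two
of its walls separating it from `-c₀`. -/
def Bineighborly {n : ℕ} (A : Finset (V n)) (c₀ : V n → Bool) : Prop :=
  ∀ c, IsChamber A c → ∀ u w, IsWall A c u → IsWall A c w →
    u ∈ SepSet A c (fun v => !c₀ v) → w ∈ SepSet A c (fun v => !c₀ v) → IncidentLoc A c u w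

/-- Every chamber of `A` is a simplicial cone: its walls are linearly independent
and span the same subspace as `A`. -/
def IsSimplicial {n : ℕ} (A : Finset (V n)) : Prop :=
  ∀ c, IsChamber A c →
    LinearIndependent ℝ ((↑) : {v // IsWall A c v} → V n) ∧
      Submodule.span ℝ {v | IsWall A c v} = Submodule.span ℝ (A : Set (V n))

/-!
Pick a point `x` of `l` in the closure of `c₀` and a generic point `y` of `c₀`. Along the line
`s ↦ y - s • x` the hyperplanes through `l` keep their sign, while each hyperplane `H` off `l` is
crossed exactly once, at `s = (H ⬝ᵥ y) / (H ⬝ᵥ x)`; genericity makes these parameters distinct,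
and ordering `A - A_l` by them gives the chain `c₀, c₁, …, c_t` in the fiber.

Conversely, modularity of `l` puts the flat `H ∩ H'` of a hyperplane `H` off `l` and any other
`H'` on a hyperplane of `A_l`. Writing that hyperplane as a combination of `H` and `H'`, a sign
computation shows that a chamber of the fiber which is separated from `c₀` by `H'` is also
separated from `c₀` by every `H` crossed before `H'`. So its separation set from `c₀` is an
initial segment of the order, and the chamber is one of the `c_i`.
-/

open Finset

section

variable {n : ℕ}

@[simp]
lemma hypl_apply (v x : V n) : hypl v x = v ⬝ᵥ x := rfl

@[simp]
lemma mem_ker_hypl {v x : V n} : x ∈ LinearMap.ker (hypl v) ↔ v ⬝ᵥ x = 0 := Iff.rfl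

lemma sameHyp_iff_ker_eq {u w : V n} :
    SameHyp u w ↔ LinearMap.ker (hypl u) = LinearMap.ker (hypl w) := by
  simp [SameHyp, SetLike.ext_iff]

lemma isCoatom_ker_hypl {v : V n} (hv : v ≠ 0) : IsCoatom (LinearMap.ker (hypl v)) := by
  refine LinearMap.isCoatom_ker_of_surjective fun r => ⟨(r / (v ⬝ᵥ v)) • v, ?_⟩
  have hvv : v ⬝ᵥ v ≠ 0 := by simpa [dotProduct_self_eq_zero] using hv
  simp [hypl, div_mul_cancel₀ _ hvv]

lemma IsArrangement.not_ker_le_ker {A : Finset (V n)} (hA : IsArrangement A) {u w : V n}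
    (hu : u ∈ A) (hw : w ∈ A) (huw : u ≠ w) :
    ¬ LinearMap.ker (hypl u) ≤ LinearMap.ker (hypl w) := fun hle =>
  huw <| hA.2 u hu w hw <| sameHyp_iff_ker_eq.2 <|
    (((isCoatom_ker_hypl (hA.1 u hu)).le_iff.1 hle).resolve_left
      (isCoatom_ker_hypl (hA.1 w hw)).1).symm

lemma IsArrangement.smul_sub_smul_ne_zero {A : Finset (V n)} (hA : IsArrangement A)
    {u w : V n} (hu : u ∈ A) (hw : w ∈ A) (huw : u ≠ w) {a b : ℝ} (ha : a ≠ 0) (hb : b ≠ 0) :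
    a • u - b • w ≠ 0 := by
  intro h
  refine huw (hA.2 u hu w hw fun x => ?_)
  have hx : a * (u ⬝ᵥ x) = b * (w ⬝ᵥ x) := by
    simpa [sub_dotProduct, smul_dotProduct, sub_eq_zero] using congrArg (· ⬝ᵥ x) h
  constructor <;> intro h0
  · simpa [h0, hb] using hx
  · simpa [h0, ha] using hx

lemma exists_dotProduct_eq_add_of_ker_le {u w z : V n}
    (h : LinearMap.ker (hypl u) ⊓ LinearMap.ker (hypl w) ≤ LinearMap.ker (hypl z)) :
    ∃ α β : ℝ, ∀ x, z ⬝ᵥ x = α * (u ⬝ᵥ x) + β * (w ⬝ᵥ x) := by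
  have hspan := mem_span_of_iInf_ker_le_ker (L := ![hypl u, hypl w]) (K := hypl z)
    fun x hx => h (by simp only [Submodule.mem_iInf] at hx; exact ⟨hx 0, hx 1⟩)
  rw [Matrix.range_cons, Matrix.range_cons, Matrix.range_empty, Set.union_empty,
    Set.singleton_union, Submodule.mem_span_pair] at hspan
  obtain ⟨α, β, hαβ⟩ := hspan
  exact ⟨α, β, fun x => by simpa using (LinearMap.congr_fun hαβ x).symm⟩

def center (A : Finset (V n)) : Submodule ℝ (V n) := A.inf fun v => LinearMap.ker (hypl v)

lemma center_le_ker {A : Finset (V n)} {v : V n} (hv : v ∈ A) : center A ≤ LinearMap.ker (hypl v) :=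
  Finset.inf_le hv

lemma le_finrank_center_add_rankA (A : Finset (V n)) :
    n ≤ Module.finrank ℝ (center A) + rankA A := by
  set W := (Submodule.span ℝ (A : Set (V n))).map (dotProductEquiv ℝ (Fin n)).toLinearMap
  have hW : Module.finrank ℝ W = rankA A :=
    (LinearEquiv.finrank_map_eq (dotProductEquiv ℝ (Fin n)) _)
  have hle : W.dualCoannihilator ≤ center A := by
    intro x hx
    simp only [center, Submodule.mem_finsetInf, mem_ker_hypl]
    intro v hv
    exact (Submodule.mem_dualCoannihilator _).1 hx _
      (Submodule.mem_map_of_mem (Submodule.subset_span hv))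
  have hdim := Subspace.finrank_add_finrank_dualCoannihilator_eq W
  rw [Module.finrank_fin_fun, hW] at hdim
  have : Module.finrank ℝ W.dualCoannihilator ≤ Module.finrank ℝ (center A) :=
    Submodule.finrank_mono hle
  omega

lemma center_le_of_mem_interLattice {A : Finset (V n)} {X : Submodule ℝ (V n)}
    (hX : X ∈ InterLattice A) : center A ≤ X := by
  obtain ⟨S, hSA, rfl⟩ := hX
  exact Finset.inf_mono hSA

lemma exists_le_ker_of_mem_interLattice {A : Finset (V n)} {X : Submodule ℝ (V n)}
    (hX : X ∈ InterLattice A) (hXtop : X ≠ ⊤) : ∃ z ∈ A, X ≤ LinearMap.ker (hypl z) := by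
  obtain ⟨S, hSA, rfl⟩ := hX
  obtain ⟨z, hz⟩ : S.Nonempty := Finset.nonempty_iff_ne_empty.2 fun h => hXtop (by simp [h])
  exact ⟨z, hSA hz, Finset.inf_le hz⟩

lemma ker_inf_ker_mem_interLattice {A : Finset (V n)} {u w : V n} (hu : u ∈ A) (hw : w ∈ A) :
    LinearMap.ker (hypl u) ⊓ LinearMap.ker (hypl w) ∈ InterLattice A :=
  ⟨{u, w}, by simp [Finset.insert_subset_iff, hu, hw], by simp⟩

lemma IsModular.inf_ker_eq_center {A : Finset (V n)} {l : Submodule ℝ (V n)}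
    (hmod : IsModular A l) (hline : Module.finrank ℝ l = n - (rankA A - 1)) {u : V n}
    (hu : u ∈ A) (hul : ¬ l ≤ LinearMap.ker (hypl u)) :
    l ⊓ LinearMap.ker (hypl u) = center A := by
  have hcenter := le_finrank_center_add_rankA A
  have hlt := Submodule.finrank_lt_finrank_of_lt (inf_lt_left.2 hul)
  refine (Submodule.eq_of_le_of_finrank_le
    (le_inf (center_le_of_mem_interLattice hmod.1) (center_le_ker hu))
    (by omega)).symm

lemma IsModular.exists_ker_le_of_line {A : Finset (V n)} (hA : IsArrangement A)
    {l : Submodule ℝ (V n)} (hmod : IsModular A l)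
    (hline : Module.finrank ℝ l = n - (rankA A - 1)) {u w : V n} (hu : u ∈ A) (hw : w ∈ A)
    (huw : u ≠ w) (hul : ¬ l ≤ LinearMap.ker (hypl u)) :
    ∃ z ∈ A, l ≤ LinearMap.ker (hypl z) ∧
      LinearMap.ker (hypl u) ⊓ LinearMap.ker (hypl w) ≤ LinearMap.ker (hypl z) := by
  set X := LinearMap.ker (hypl u) ⊓ LinearMap.ker (hypl w)
  have hX : Module.finrank ℝ X + 2 ≤ n := by
    have h1 : Module.finrank ℝ X < _ :=
      Submodule.finrank_lt_finrank_of_lt (inf_lt_left.2 (hA.not_ker_le_ker hu hw huw))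
    have h2 := Submodule.finrank_lt_finrank_of_lt (isCoatom_ker_hypl (hA.1 u hu)).lt_top
    simp only [finrank_top, Module.finrank_fin_fun] at h2
    omega
  have hlX : l ⊓ X = center A := by
    refine le_antisymm ?_ (le_inf (center_le_of_mem_interLattice hmod.1)
      (center_le_of_mem_interLattice (ker_inf_ker_mem_interLattice hu hw)))
    rw [← hmod.inf_ker_eq_center hline hu hul]
    exact inf_le_inf_left l inf_le_left
  have hsup : l ⊔ X ≠ ⊤ := by
    intro htop
    have := Submodule.finrank_sup_add_finrank_inf_eq l X
    have := le_finrank_center_add_rankA A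
    rw [htop, hlX, finrank_top, Module.finrank_fin_fun] at *
    omega
  obtain ⟨z, hzA, hz⟩ :=
    exists_le_ker_of_mem_interLattice (hmod.2 X (ker_inf_ker_mem_interLattice hu hw)) hsup
  exact ⟨z, hzA, le_sup_left.trans hz, le_sup_right.trans hz⟩

def orient (c : V n → Bool) (v : V n) : V n := if c v then v else -v

lemma orient_dotProduct_pos_iff {c : V n → Bool} {v x : V n} :
    0 < orient c v ⬝ᵥ x ↔ if c v then 0 < v ⬝ᵥ x else v ⬝ᵥ x < 0 := by
  unfold orient; split <;> simp [neg_dotProduct]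

lemma orient_dotProduct_eq_zero_iff {c : V n → Bool} {v x : V n} :
    orient c v ⬝ᵥ x = 0 ↔ v ⬝ᵥ x = 0 := by
  unfold orient; split <;> simp [neg_dotProduct]

lemma ker_hypl_orient (c : V n → Bool) (v : V n) :
    LinearMap.ker (hypl (orient c v)) = LinearMap.ker (hypl v) := by
  ext x; simp [orient_dotProduct_eq_zero_iff]

lemma orient_congr {c d : V n → Bool} {v : V n} (h : d v = c v) : orient d v = orient c v := by
  simp [orient, h]

lemma orient_of_ne {c d : V n → Bool} {v : V n} (h : d v ≠ c v) : orient d v = -orient c v := by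
  cases hc : c v <;> cases hd : d v <;> simp_all [orient]

lemma realizes_iff {A : Finset (V n)} {c : V n → Bool} {x : V n} :
    Realizes A c x ↔ ∀ v ∈ A, 0 < orient c v ⬝ᵥ x := by
  simp only [Realizes, orient_dotProduct_pos_iff]

lemma isOpen_setOf_realizes (A : Finset (V n)) (c : V n → Bool) :
    IsOpen {x | Realizes A c x} := by
  simp only [realizes_iff, Set.ofPred_forall]
  exact isOpen_biInter_finset fun v _ =>
    isOpen_lt continuous_const (hypl (orient c v)).continuous_of_finiteDimensional

lemma dense_setOf_dotProduct_ne_zero {f : V n} (hf : f ≠ 0) : Dense {x | f ⬝ᵥ x ≠ 0} := by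
  have hint : interior (LinearMap.ker (hypl f) : Set (V n)) = ∅ := by
    by_contra h
    exact (isCoatom_ker_hypl hf).1
      ((LinearMap.ker (hypl f)).eq_top_of_nonempty_interior' (Set.nonempty_iff_ne_empty.2 h))
  simpa [interior_eq_empty_iff_dense_compl, Set.compl_def] using hint

lemma IsChamber.exists_realizes_forall_dotProduct_ne_zero {A : Finset (V n)} {c : V n → Bool}
    (hc : IsChamber A c) {ι : Type*} (s : Finset ι) (f : ι → V n) (hf : ∀ i ∈ s, f i ≠ 0) :
    ∃ y, Realizes A c y ∧ ∀ i ∈ s, f i ⬝ᵥ y ≠ 0 := by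
  have hdense : Dense (⋂ i ∈ (s : Set ι), {x | f i ⬝ᵥ x ≠ 0}) :=
    dense_biInter_of_isOpen
      (fun i _ => isOpen_ne_fun (hypl (f i)).continuous_of_finiteDimensional continuous_const)
      s.countable_toSet fun i hi => dense_setOf_dotProduct_ne_zero (hf i hi)
  obtain ⟨y, hy, hyf⟩ := hdense.inter_open_nonempty _ (isOpen_setOf_realizes A c) hc
  exact ⟨y, hy, by simpa using hyf⟩

lemma Finset.exists_enum_strictMono {α β : Type*} [LinearOrder β] (s : Finset α) {f : α → β}
    (hf : Set.InjOn f s) :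
    ∃ H : Fin #s → α, Function.Injective H ∧ (∀ k, H k ∈ s) ∧ (∀ v ∈ s, ∃ k, H k = v) ∧
      StrictMono (f ∘ H) := by
  set e := s.equivFin.symm
  set σ := Tuple.sort (fun k => f (e k))
  refine ⟨fun k => e (σ k), Subtype.val_injective.comp (e.injective.comp σ.injective),
    fun k => (e (σ k)).2, fun v hv => ⟨σ.symm (e.symm ⟨v, hv⟩), by simp⟩, ?_⟩
  refine (Tuple.monotone_sort (fun k => f (e k))).strictMono_of_injective
    fun i j hij => σ.injective ?_
  exact e.injective (Subtype.val_injective (hf (e (σ i)).2 (e (σ j)).2 hij))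

lemma StrictMono.exists_separating {α : Type*} [LinearOrder α] [DenselyOrdered α]
    [NoMinOrder α] [NoMaxOrder α] [Nonempty α] {t : ℕ} {q : Fin t → α} (hq : StrictMono q)
    (i : Fin (t + 1)) :
    ∃ s, ∀ k, (k.castSucc < i → q k < s) ∧ (i ≤ k.castSucc → s < q k) := by
  obtain ⟨s, hlo, hhi⟩ := Finset.exists_between'
    ((univ.filter fun k : Fin t => k.castSucc < i).image q)
    ((univ.filter fun k : Fin t => i ≤ k.castSucc).image q) (by
      simp only [Finset.mem_image, Finset.mem_filter, Finset.mem_univ, true_and]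
      rintro _ ⟨j, hj, rfl⟩ _ ⟨k, hk, rfl⟩
      exact hq (Fin.castSucc_lt_castSucc_iff.1 (hj.trans_le hk)))
  exact ⟨s, fun k => ⟨fun hk => hlo _ (Finset.mem_image_of_mem q (by simpa using hk)),
    fun hk => hhi _ (Finset.mem_image_of_mem q (by simpa using hk))⟩⟩

lemma Fin.mem_iff_lt_card_of_isLowerSet {t : ℕ} {D : Finset (Fin t)}
    (hD : IsLowerSet (D : Set (Fin t))) (k : Fin t) : k ∈ D ↔ (k : ℕ) < #D := by
  constructor
  · intro hk
    have := Finset.card_le_card fun j hj => hD (Finset.mem_Iic.1 hj) hk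
    rw [Fin.card_Iic] at this
    omega
  · intro hk
    by_contra hkD
    have := Finset.card_le_card fun j (hj : j ∈ D) =>
      Finset.mem_Iio.2 (lt_of_not_ge fun hkj => hkD (hD hkj hj))
    rw [Fin.card_Iio] at this
    omega

section FlipChain

variable {t : ℕ} (c₀ : V n → Bool) (H : Fin t → V n)

/-- The chamber reached from `c₀` after crossing `H 0, …, H (i - 1)`. -/
noncomputable def flipChain (i : Fin (t + 1)) (v : V n) : Bool :=
  if ∃ k, H k = v ∧ k.castSucc < i then !c₀ v else c₀ v

@[simp]
lemma flipChain_zero : flipChain c₀ H 0 = c₀ := by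
  ext v; simp [flipChain]

variable {c₀ H}

lemma flipChain_of_forall_ne {v : V n} (hv : ∀ k, H k ≠ v) (i : Fin (t + 1)) :
    flipChain c₀ H i v = c₀ v := by
  simp [flipChain, hv]

lemma flipChain_apply (hH : Function.Injective H) (i : Fin (t + 1)) (k : Fin t) :
    flipChain c₀ H i (H k) = if k.castSucc < i then !c₀ (H k) else c₀ (H k) := by
  simp [flipChain, hH.eq_iff]

lemma sepSet_flipChain {A : Finset (V n)} (hH : Function.Injective H) (hHA : ∀ k, H k ∈ A)
    (i : Fin t) : SepSet A (flipChain c₀ H i.castSucc) (flipChain c₀ H i.succ) = {H i} := by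
  ext v
  simp only [SepSet, Finset.mem_filter, Finset.mem_singleton]
  constructor
  · rintro ⟨-, hne⟩
    by_cases hv : ∃ k, H k = v
    · obtain ⟨k, rfl⟩ := hv
      rw [flipChain_apply hH, flipChain_apply hH] at hne
      simp only [Fin.castSucc_lt_castSucc_iff, Fin.castSucc_lt_succ_iff] at hne
      split_ifs at hne with hlt hle hle
      · exact absurd rfl hne
      · exact absurd hlt.le hle
      · rw [le_antisymm hle (not_lt.1 hlt)]
      · exact absurd rfl hne
    · simp only [not_exists] at hv
      simp [flipChain_of_forall_ne hv] at hne
  · rintro rfl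
    refine ⟨hHA i, ?_⟩
    rw [flipChain_apply hH, flipChain_apply hH]
    simp

lemma exists_eq_flipChain_of_isLowerSet {A : Finset (V n)} (hH : Function.Injective H)
    {d : V n → Bool} (hd : ∀ v ∈ A, (∀ k, H k ≠ v) → d v = c₀ v)
    (hlow : IsLowerSet {k | d (H k) ≠ c₀ (H k)}) :
    ∃ i, ∀ v ∈ A, d v = flipChain c₀ H i v := by
  set D := univ.filter fun k => d (H k) ≠ c₀ (H k)
  have hD : ∀ k, d (H k) ≠ c₀ (H k) ↔ (k : ℕ) < #D := fun k => by
    simpa [D] using Fin.mem_iff_lt_card_of_isLowerSet (D := D) (by simpa [D] using hlow) k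
  refine ⟨⟨#D, Nat.lt_succ_of_le (card_le_univ D |>.trans_eq (Fintype.card_fin t))⟩,
    fun v hv => ?_⟩
  by_cases hvH : ∃ k, H k = v
  · obtain ⟨k, rfl⟩ := hvH
    rw [flipChain_apply hH]
    split_ifs with h
    · exact Bool.eq_not_of_ne ((hD k).2 h)
    · exact not_not.1 (mt (hD k).1 h)
  · simp only [not_exists] at hvH
    rw [hd v hv hvH, flipChain_of_forall_ne hvH]

end FlipChain

section Crossing

/-- The parameter `s` at which the line `s ↦ y - s • x` meets the hyperplane of `v`. -/
noncomputable def crossing (x y v : V n) : ℝ := (v ⬝ᵥ y) / (v ⬝ᵥ x)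

variable {x y : V n}

lemma crossing_orient (c : V n → Bool) (v : V n) : crossing x y (orient c v) = crossing x y v := by
  unfold crossing orient; split <;> simp [neg_dotProduct, neg_div_neg_eq]

lemma dotProduct_eq_crossing_mul {v : V n} (hx : v ⬝ᵥ x ≠ 0) :
    v ⬝ᵥ y = crossing x y v * (v ⬝ᵥ x) :=
  (div_mul_cancel₀ _ hx).symm

lemma dotProduct_sub_smul_eq {v : V n} (hx : v ⬝ᵥ x ≠ 0) (s : ℝ) :
    v ⬝ᵥ (y - s • x) = (crossing x y v - s) * (v ⬝ᵥ x) := by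
  rw [dotProduct_sub, dotProduct_smul, smul_eq_mul, dotProduct_eq_crossing_mul hx]
  ring

lemma crossing_eq_crossing_iff {u w : V n} (hu : u ⬝ᵥ x ≠ 0) (hw : w ⬝ᵥ x ≠ 0) :
    crossing x y u = crossing x y w ↔ ((w ⬝ᵥ x) • u - (u ⬝ᵥ x) • w) ⬝ᵥ y = 0 := by
  rw [crossing, crossing, div_eq_div_iff hu hw, sub_dotProduct, smul_dotProduct,
    smul_dotProduct, smul_eq_mul, smul_eq_mul, sub_eq_zero]
  constructor <;> intro h <;> linarith

lemma IsArrangement.exists_realizes_injOn_crossing {A : Finset (V n)} (hA : IsArrangement A)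
    {c : V n → Bool} (hc : IsChamber A c) {B : Finset (V n)} (hBA : B ⊆ A)
    (hx : ∀ v ∈ B, v ⬝ᵥ x ≠ 0) : ∃ y, Realizes A c y ∧ Set.InjOn (crossing x y) B := by
  obtain ⟨y, hy, hyB⟩ := hc.exists_realizes_forall_dotProduct_ne_zero B.offDiag
    (fun p => (p.2 ⬝ᵥ x) • p.1 - (p.1 ⬝ᵥ x) • p.2) fun p hp => by
      obtain ⟨h1, h2, h12⟩ := Finset.mem_offDiag.1 hp
      exact hA.smul_sub_smul_ne_zero (hBA h1) (hBA h2) h12 (hx _ h2) (hx _ h1)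
  refine ⟨y, hy, fun u hu w hw huw => by_contra fun hne => hyB (u, w) ?_ ?_⟩
  · exact Finset.mem_offDiag.2 ⟨hu, hw, hne⟩
  · exact (crossing_eq_crossing_iff (hx u hu) (hx w hw)).1 huw

lemma isChamber_flipChain {A : Finset (V n)} {c₀ : V n → Bool} {t : ℕ} {H : Fin t → V n}
    (hy : Realizes A c₀ y) (hH : Function.Injective H)
    (hx0 : ∀ v ∈ A, (∀ k, H k ≠ v) → v ⬝ᵥ x = 0) (hxH : ∀ k, 0 < orient c₀ (H k) ⬝ᵥ x)
    (hmono : StrictMono (crossing x y ∘ H)) (i : Fin (t + 1)) :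
    IsChamber A (flipChain c₀ H i) := by
  obtain ⟨s, hs⟩ := hmono.exists_separating i
  refine ⟨y - s • x, realizes_iff.2 fun v hv => ?_⟩
  by_cases hvH : ∃ k, H k = v
  · obtain ⟨k, rfl⟩ := hvH
    have hval := dotProduct_sub_smul_eq (y := y) (hxH k).ne' s
    rw [crossing_orient] at hval
    obtain ⟨hlo, hhi⟩ := hs k
    by_cases hk : k.castSucc < i
    · rw [orient_of_ne (c := c₀) (by simp [flipChain_apply hH, hk]), neg_dotProduct, hval,
        ← neg_mul]
      exact mul_pos (neg_pos.2 (sub_neg.2 (hlo hk))) (hxH k)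
    · rw [orient_congr (c := c₀) (by simp [flipChain_apply hH, hk]), hval]
      exact mul_pos (sub_pos.2 (hhi (not_lt.1 hk))) (hxH k)
  · simp only [not_exists] at hvH
    rw [orient_congr (flipChain_of_forall_ne hvH i), dotProduct_sub, dotProduct_smul,
      orient_dotProduct_eq_zero_iff.2 (hx0 v hv hvH), smul_zero, sub_zero]
    exact realizes_iff.1 hy v hv

end Crossing

section Fiber

variable {A : Finset (V n)} {l : Submodule ℝ (V n)} {c₀ : V n → Bool} {x y : V n}

lemma IsModular.ne_of_ne_of_crossing_lt (hA : IsArrangement A) (hmod : IsModular A l)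
    (hline : Module.finrank ℝ l = n - (rankA A - 1)) (hxl : x ∈ l)
    (hx : ∀ v ∈ A, ¬ l ≤ LinearMap.ker (hypl v) → 0 < orient c₀ v ⬝ᵥ x)
    (hy : Realizes A c₀ y) {d : V n → Bool} {p : V n} (hp : Realizes A d p)
    (hd : ∀ v ∈ A, l ≤ LinearMap.ker (hypl v) → d v = c₀ v) {u w : V n} (hu : u ∈ A)
    (hw : w ∈ A) (hul : ¬ l ≤ LinearMap.ker (hypl u)) (hwl : ¬ l ≤ LinearMap.ker (hypl w))
    (hlt : crossing x y u < crossing x y w) (hdw : d w ≠ c₀ w) : d u ≠ c₀ u := by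
  intro hdu
  obtain ⟨z, hzA, hlz, hz⟩ :=
    hmod.exists_ker_le_of_line hA hline hu hw (by rintro rfl; exact hdw hdu) hul
  obtain ⟨α, β, hcomb⟩ := exists_dotProduct_eq_add_of_ker_le
    (u := orient c₀ u) (w := orient c₀ w) (z := orient c₀ z) (by simpa [ker_hypl_orient] using hz)
  have hux := hx u hu hul
  have hwx := hx w hw hwl
  have hzx : orient c₀ z ⬝ᵥ x = 0 := orient_dotProduct_eq_zero_iff.2 (hlz hxl)
  have hzy : 0 < orient c₀ z ⬝ᵥ y := realizes_iff.1 hy z hzA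
  have hzp : 0 < orient c₀ z ⬝ᵥ p := orient_congr (hd z hzA hlz) ▸ realizes_iff.1 hp z hzA
  have hup : 0 < orient c₀ u ⬝ᵥ p := orient_congr hdu ▸ realizes_iff.1 hp u hu
  have hwp : orient c₀ w ⬝ᵥ p < 0 := by
    simpa [orient_of_ne hdw, neg_dotProduct] using realizes_iff.1 hp w hw
  have huy := dotProduct_eq_crossing_mul (y := y) hux.ne'
  have hwy := dotProduct_eq_crossing_mul (y := y) hwx.ne'
  rw [crossing_orient] at huy hwy
  rw [hcomb] at hzx hzy hzp
  rw [huy, hwy] at hzy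
  have hβ : β * (orient c₀ w ⬝ᵥ x) = -(α * (orient c₀ u ⬝ᵥ x)) := by linarith
  -- since `z` vanishes at `x`, its sign at `y` is that of `α (crossing u - crossing w)`
  have hzy' : 0 < α * (orient c₀ u ⬝ᵥ x) * (crossing x y u - crossing x y w) := by
    linear_combination hzy + crossing x y w * hβ
  have hα : α < 0 := neg_of_mul_neg_left
    (neg_of_mul_pos_left hzy' (sub_neg.2 hlt).le) hux.le
  have hβpos : 0 < β := pos_of_mul_pos_left (hβ ▸ neg_pos.2 (mul_neg_of_neg_of_pos hα hux)) hwx.le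
  linarith [mul_neg_of_neg_of_pos hα hup, mul_neg_of_pos_of_neg hβpos hwp]

lemma IsModular.isLowerSet_setOf_ne (hA : IsArrangement A) (hmod : IsModular A l)
    (hline : Module.finrank ℝ l = n - (rankA A - 1)) (hxl : x ∈ l)
    (hx : ∀ v ∈ A, ¬ l ≤ LinearMap.ker (hypl v) → 0 < orient c₀ v ⬝ᵥ x)
    (hy : Realizes A c₀ y) {d : V n → Bool} (hdc : IsChamber A d)
    (hd : ∀ v ∈ A, l ≤ LinearMap.ker (hypl v) → d v = c₀ v) {t : ℕ} {H : Fin t → V n}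
    (hHA : ∀ k, H k ∈ A) (hHl : ∀ k, ¬ l ≤ LinearMap.ker (hypl (H k)))
    (hmono : StrictMono (crossing x y ∘ H)) : IsLowerSet {k | d (H k) ≠ c₀ (H k)} := by
  obtain ⟨p, hp⟩ := hdc
  intro k j hjk hk
  rcases hjk.eq_or_lt with rfl | hjk
  · exact hk
  · exact hmod.ne_of_ne_of_crossing_lt hA hline hxl hx hy hp hd (hHA j) (hHA k) (hHl j) (hHl k)
      (hmono hjk) hk

end Fiber

end

theorem modular_line_fiber_chain {n : ℕ} (A : Finset (V n)) (hA : IsArrangement A)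
    (c₀ : V n → Bool) (hc₀ : IsChamber A c₀) (l : Submodule ℝ (V n))
    (hmod : IsModular A l) (hline : Module.finrank ℝ l = n - (rankA A - 1))
    (hinc : IncidentSub A c₀ l) :
    ∃ (t : ℕ) (c : Fin (t + 1) → V n → Bool) (H : Fin t → V n),
      t = {v | v ∈ A ∧ ¬ l ≤ LinearMap.ker (hypl v)}.ncard ∧
      c 0 = c₀ ∧
      (∀ i, IsChamber A (c i) ∧ ∀ v ∈ A, l ≤ LinearMap.ker (hypl v) → c i v = c₀ v) ∧
      (∀ i : Fin t, SepSet A (c i.castSucc) (c i.succ) = {H i}) ∧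
      Function.Injective H ∧
      (∀ v ∈ A, (¬ l ≤ LinearMap.ker (hypl v)) ↔ ∃ i, H i = v) ∧
      (∀ d, IsChamber A d → (∀ v ∈ A, l ≤ LinearMap.ker (hypl v) → d v = c₀ v) →
        ∃ i, ∀ v ∈ A, d v = c i v) := by
  obtain ⟨x, hxl, hx⟩ := hinc
  simp only [← orient_dotProduct_pos_iff] at hx
  set B := A.filter fun v => ¬ l ≤ LinearMap.ker (hypl v)
  obtain ⟨y, hy, hinj⟩ := hA.exists_realizes_injOn_crossing hc₀ (filter_subset _ A) fun v hv =>
    orient_dotProduct_eq_zero_iff.not.1 (hx v (mem_filter.1 hv).1 (mem_filter.1 hv).2).ne'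
  obtain ⟨H, hHinj, hHB, hHsurj, hmono⟩ := B.exists_enum_strictMono hinj
  have hHA k : H k ∈ A := (mem_filter.1 (hHB k)).1
  have hHl k : ¬ l ≤ LinearMap.ker (hypl (H k)) := (mem_filter.1 (hHB k)).2
  have hoff : ∀ v ∈ A, (∀ k, H k ≠ v) ↔ l ≤ LinearMap.ker (hypl v) := fun v hv =>
    ⟨fun h => by_contra fun hl => (hHsurj v (mem_filter.2 ⟨hv, hl⟩)).elim h,
      fun hl k hk => hHl k (hk ▸ hl)⟩
  refine ⟨#B, flipChain c₀ H, H, by rw [← Set.ncard_coe_finset, coe_filter],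
    flipChain_zero c₀ H, fun i => ⟨?_, fun v hv hl => flipChain_of_forall_ne ((hoff v hv).2 hl) i⟩,
    sepSet_flipChain hHinj hHA, hHinj, fun v hv => ⟨fun hl => hHsurj v (mem_filter.2 ⟨hv, hl⟩),
      by rintro ⟨k, rfl⟩; exact hHl k⟩, fun d hdc hd => ?_⟩
  · exact isChamber_flipChain hy hHinj (fun v hv h => (hoff v hv).1 h hxl)
      (fun k => hx _ (hHA k) (hHl k)) hmono i
  · exact exists_eq_flipChain_of_isLowerSet hHinj (fun v hv h => hd v hv ((hoff v hv).1 h))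
      (hmod.isLowerSet_setOf_ne hA hline hxl hx hy hdc hd hHA hHl hmono)
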